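/- For any real or complex x ≠ 1 and any natural number n ≥ 1, ∑_{i=1}^{n} i^3 x^{i-1} = (n^3 x^{n+3} - (3n^3+3n^2-3n+1) x^{n+2} + (3n^3+6n^2-4) x^{n+1} - (n+1)^3 x^n + x^2 + 4x + 1)/(1-x)^4. -/
import Mathlib

lemma aux_8 (x : ℝ) (hx : x ≠ 1) (n : ℕ) :
    ∑ i ∈ Finset.Icc 1 n, (i : ℝ) ^ 3 * x ^ (i - 1) =
      ((n : ℝ) ^ 3 * x ^ (n + 3) - (3 * (n : ℝ) ^ 3 + 3 * (n : ℝ) ^ 2 - 3 * n + 1) * x ^ (n + 2)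
        + (3 * (n : ℝ) ^ 3 + 6 * (n : ℝ) ^ 2 - 4) * x ^ (n + 1)
        - ((n : ℝ) + 1) ^ 3 * x ^ n + x ^ 2 + 4 * x + 1) / (1 - x) ^ 4 := by
  have h1 : (1 : ℝ) - x ≠ 0 := sub_ne_zero.mpr (Ne.symm hx)
  induction n with
  | zero => simp; field_simp; ring
  | succ n ih =>
    rw [Finset.sum_Icc_succ_top (by omega), ih]
    have : n + 1 - 1 = n := rfl
    rw [this]
    push_cast
    field_simp
    ring

theorem stmt_8 (x : ℝ) (hx : x ≠ 1) (n : ℕ) (hn : 1 ≤ n) :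
    ∑ i ∈ Finset.Icc 1 n, (i : ℝ) ^ 3 * x ^ (i - 1) =
      ((n : ℝ) ^ 3 * x ^ (n + 3) - (3 * (n : ℝ) ^ 3 + 3 * (n : ℝ) ^ 2 - 3 * n + 1) * x ^ (n + 2)
        + (3 * (n : ℝ) ^ 3 + 6 * (n : ℝ) ^ 2 - 4) * x ^ (n + 1)
        - ((n : ℝ) + 1) ^ 3 * x ^ n + x ^ 2 + 4 * x + 1) / (1 - x) ^ 4 := by
  exact aux_8 x hx n
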